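/- With equal positive weights ν_i = ν and B ≥ 3 anchors placed at the vertices of a regular B-gon around the target (θ_i = 2πi/B), the PEB equals sqrt(Bν / (ν² Σ_{i<j} sin²(2π(j−i)/B))) = 2/sqrt(νB), using the identity Σ_{0 ≤ i < j < B} sin²(2π(j−i)/B) = B²/4. -/

import Mathlib

/-!
Since `sin² x = (1 - cos 2x) / 2` and `∑ₖ ∑ₗ cos (φₗ - φₖ) = ‖∑ₗ exp (φₗ I)‖²`, the full double sum
`∑ₖ ∑ₗ sin² (θₗ - θₖ)` equals `(B² - ‖∑ₗ exp (2θₗ I)‖²) / 2`. For the regular `B`-gon the points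
`exp (2θₗ I)` are the powers of the `B`-th root of unity `exp (4π I / B) ≠ 1`, so their sum vanishes
and the double sum is `B² / 2`; by symmetry the pairs `k < l` contribute half of it.
-/

open Finset Real

theorem geom_sum_eq_zero_of_pow_eq_one {K : Type*} [Field K] {z : K} {n : ℕ}
    (hz : z ≠ 1) (hzn : z ^ n = 1) : ∑ k ∈ range n, z ^ k = 0 := by
  rw [geom_sum_eq hz, hzn, sub_self, zero_div]

theorem sum_range_exp_two_pi_mul_div_mul_I {n m : ℕ} (h : ¬ n ∣ m) :
    ∑ k ∈ range n, Complex.exp ((2 * π * m * k / n : ℝ) * Complex.I) = 0 := by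
  rcases eq_or_ne n 0 with rfl | hn
  · simp
  have hζ := Complex.isPrimitiveRoot_exp n hn
  have hterm (k : ℕ) : Complex.exp ((2 * π * m * k / n : ℝ) * Complex.I) =
      (Complex.exp (2 * π * Complex.I / n) ^ m) ^ k := by
    rw [← pow_mul, ← Complex.exp_nat_mul]
    push_cast
    ring_nf
  simp_rw [hterm]
  refine geom_sum_eq_zero_of_pow_eq_one ?_ ?_
  · rwa [Ne, hζ.pow_eq_one_iff_dvd]
  · rw [← pow_mul, mul_comm m n, pow_mul, hζ.pow_eq_one, one_pow]

theorem sum_range_cos_sin_two_pi_mul_div_eq_zero {n m : ℕ} (h : ¬ n ∣ m) :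
    ∑ k ∈ range n, cos (2 * π * m * k / n) = 0 ∧ ∑ k ∈ range n, sin (2 * π * m * k / n) = 0 := by
  have hsum := sum_range_exp_two_pi_mul_div_mul_I h
  constructor
  · simpa only [Complex.re_sum, Complex.exp_ofReal_mul_I_re, Complex.zero_re]
      using congrArg Complex.re hsum
  · simpa only [Complex.im_sum, Complex.exp_ofReal_mul_I_im, Complex.zero_im]
      using congrArg Complex.im hsum

theorem sum_sum_cos_sub {ι : Type*} (s : Finset ι) (θ : ι → ℝ) :
    ∑ i ∈ s, ∑ j ∈ s, cos (θ j - θ i) =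
      (∑ i ∈ s, cos (θ i)) ^ 2 + (∑ i ∈ s, sin (θ i)) ^ 2 := by
  simp only [cos_sub, sum_add_distrib, sq, sum_mul_sum]
  congr 1 <;> exact sum_comm

theorem sum_sum_sin_sq_sub {ι : Type*} (s : Finset ι) (θ : ι → ℝ) :
    ∑ i ∈ s, ∑ j ∈ s, sin (θ j - θ i) ^ 2 =
      ((#s : ℝ) ^ 2 - (∑ i ∈ s, cos (2 * θ i)) ^ 2 - (∑ i ∈ s, sin (2 * θ i)) ^ 2) / 2 := by
  have h := sum_sum_cos_sub s (fun i ↦ 2 * θ i)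
  simp only [sin_sq_eq_half_sub, ← mul_sub] at h ⊢
  simp only [sum_sub_distrib, sum_const, ← sum_div, h, nsmul_eq_mul]
  ring

theorem sum_sum_sin_sq_two_pi_mul_sub_div {n : ℕ} (hn : 2 < n) :
    ∑ i : Fin n, ∑ j : Fin n, sin (2 * π * ((j : ℕ) - (i : ℕ) : ℝ) / n) ^ 2 = (n : ℝ) ^ 2 / 2 := by
  set θ : Fin n → ℝ := fun k ↦ 2 * π * (k : ℕ) / n
  have hangle (i j : Fin n) : 2 * π * ((j : ℕ) - (i : ℕ) : ℝ) / n = θ j - θ i := by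
    simp only [θ]; ring
  have hdouble (k : Fin n) : 2 * θ k = 2 * π * (2 : ℕ) * (k : ℕ) / n := by
    simp only [θ]; push_cast; ring
  obtain ⟨hcos, hsin⟩ := sum_range_cos_sin_two_pi_mul_div_eq_zero (n := n) (m := 2)
    (Nat.not_dvd_of_pos_of_lt two_pos hn)
  simp only [hangle, sum_sum_sin_sq_sub, card_univ, Fintype.card_fin, hdouble,
    Fin.sum_univ_eq_sum_range (fun k ↦ cos (2 * π * (2 : ℕ) * k / n)),
    Fin.sum_univ_eq_sum_range (fun k ↦ sin (2 * π * (2 : ℕ) * k / n)), hcos, hsin]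
  ring

theorem two_nsmul_sum_sum_ite_lt {ι M : Type*} [Fintype ι] [LinearOrder ι] [AddCommMonoid M]
    (F : ι → ι → M) (hsymm : ∀ i j, F i j = F j i) (hdiag : ∀ i, F i i = 0) :
    2 • ∑ i, ∑ j, (if i < j then F i j else 0) = ∑ i, ∑ j, F i j := by
  have hsplit (i j : ι) : F i j = (if i < j then F i j else 0) + (if j < i then F j i else 0) := by
    rcases lt_trichotomy i j with h | rfl | h
    · simp [h, h.not_gt]
    · simp [hdiag]
    · simp [h, h.not_gt, hsymm i j]
  calc 2 • ∑ i, ∑ j, (if i < j then F i j else 0)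
      = ∑ i, ∑ j, (if i < j then F i j else 0) + ∑ i, ∑ j, (if j < i then F j i else 0) := by
        rw [two_nsmul, sum_comm (f := fun i j ↦ if j < i then F j i else 0)]
    _ = ∑ i, ∑ j, F i j := by
        simp only [← sum_add_distrib, ← hsplit]

theorem PEB_regular_polygon_general
    (B : ℕ) (hB : 3 ≤ B) (ν : ℝ) :
    (∑ i : Fin B, ∑ j : Fin B, (if i < j then
        Real.sin (2 * π * ((j : ℕ) - (i : ℕ) : ℝ) / B) ^ 2 else 0))
      = (B : ℝ) ^ 2 / 4
    ∧
    Real.sqrt (((B : ℝ) * ν) /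
        (ν ^ 2 * ∑ i : Fin B, ∑ j : Fin B, (if i < j then
          Real.sin (2 * π * ((j : ℕ) - (i : ℕ) : ℝ) / B) ^ 2 else 0)))
      = 2 / Real.sqrt (ν * B) := by
  have hpairs := two_nsmul_sum_sum_ite_lt
    (fun i j : Fin B ↦ sin (2 * π * ((j : ℕ) - (i : ℕ) : ℝ) / B) ^ 2)
    (fun i j ↦ by rw [← neg_sub, mul_neg, neg_div, sin_neg, neg_sq]) (fun i ↦ by simp)
  rw [sum_sum_sin_sq_two_pi_mul_sub_div hB, nsmul_eq_mul] at hpairs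
  have hkey : (∑ i : Fin B, ∑ j : Fin B, (if i < j then
      Real.sin (2 * π * ((j : ℕ) - (i : ℕ) : ℝ) / B) ^ 2 else 0)) = (B : ℝ) ^ 2 / 4 := by
    push_cast at hpairs; linarith
  refine ⟨hkey, ?_⟩
  have hB0 : (B : ℝ) ≠ 0 := by positivity
  have hratio : (B : ℝ) * ν / (ν ^ 2 * ((B : ℝ) ^ 2 / 4)) = 2 ^ 2 / (ν * B) := by
    rcases eq_or_ne ν 0 with rfl | hν
    · simp
    · field_simp; ring
  rw [hkey, hratio, sqrt_div (by positivity), sqrt_sq zero_le_two]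

/-- With equal weights `νᵢ = ν > 0` and `B ≥ 3` anchors at the vertices of a
regular `B`-gon around the target (`θᵢ = 2πi/B`), the key identity
`Σ_{0 ≤ i < j < B} sin²(2π(j−i)/B) = B²/4` holds and the PEB equals
`√(Bν / (ν² Σ_{i<j} sin²(2π(j−i)/B))) = 2/√(νB)`. -/
theorem PEB_regular_polygon
    (B : ℕ) (hB : 3 ≤ B) (ν : ℝ) (hν : 0 < ν) :
    (∑ i : Fin B, ∑ j : Fin B, (if i < j then
        Real.sin (2 * π * ((j : ℕ) - (i : ℕ) : ℝ) / B) ^ 2 else 0))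
      = (B : ℝ) ^ 2 / 4
    ∧
    Real.sqrt (((B : ℝ) * ν) /
        (ν ^ 2 * ∑ i : Fin B, ∑ j : Fin B, (if i < j then
          Real.sin (2 * π * ((j : ℕ) - (i : ℕ) : ℝ) / B) ^ 2 else 0)))
      = 2 / Real.sqrt (ν * B) :=
  PEB_regular_polygon_general B hB ν
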